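/- arXiv:1411.0985 — 7 statements merged into one kernel-verified Lean document; each statement's English description precedes it below -/
import Mathlib

section
/- Every finite homocyclic abelian p-group is morphic. -/
/-!
Write `A = (ℤ/p^e)ⁿ` and `t_H(k)` for the number of `x ∈ H` with `x^(p^k) = 1`. For a subgroup
`N ≤ A` and `k ≤ e`, counting `{x | x^(p^k) ∈ N}` in two ways, and using that the `p^k`-th powers
of `A` are exactly its `p^(e-k)`-torsion, gives `t_{A/N}(k) · |N| = p^(kn) · t_N(e-k)`.
So `A/N₁ ≅ N₂` forces `t_{A/N₂} = t_{N₁}`, and a finite abelian `p`-group is determined by its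
torsion counts: for `∏ ℤ/p^(cᵢ)` one has `t(k) = p^(∑ min cᵢ k)`, whose second differences count
the `cᵢ` equal to each value.
-/

/-- A group is morphic if for every pair of normal subgroups `N₁, N₂`,
`G/N₁ ≅ N₂` holds if and only if `G/N₂ ≅ N₁`. -/
def IsMorphic (G : Type*) [Group G] : Prop :=
  ∀ N₁ N₂ : Subgroup G, ∀ h₁ : N₁.Normal, ∀ h₂ : N₂.Normal,
    (Nonempty ((G ⧸ N₁) ≃* N₂) ↔ Nonempty ((G ⧸ N₂) ≃* N₁))

theorem nonempty_mulEquiv_congr {X X' Y Y' : Type*} [Mul X] [Mul X'] [Mul Y] [Mul Y']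
    (eX : X ≃* X') (eY : Y ≃* Y') : Nonempty (X ≃* Y) ↔ Nonempty (X' ≃* Y') :=
  ⟨fun ⟨g⟩ => ⟨eX.symm.trans (g.trans eY)⟩, fun ⟨g⟩ => ⟨eX.trans (g.trans eY.symm)⟩⟩

theorem IsMorphic.of_mulEquiv {G H : Type*} [Group G] [Group H] (f : G ≃* H) (hH : IsMorphic H) :
    IsMorphic G := by
  intro N₁ N₂ h₁ h₂
  have k₁ := h₁.map (f : G →* H) f.surjective
  have k₂ := h₂.map (f : G →* H) f.surjective
  calc Nonempty ((G ⧸ N₁) ≃* N₂)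
      ↔ Nonempty ((H ⧸ N₁.map (f : G →* H)) ≃* N₂.map (f : G →* H)) :=
        nonempty_mulEquiv_congr (QuotientGroup.congr N₁ _ f rfl) (f.subgroupMap N₂)
    _ ↔ Nonempty ((H ⧸ N₂.map (f : G →* H)) ≃* N₁.map (f : G →* H)) := hH _ _ k₁ k₂
    _ ↔ Nonempty ((G ⧸ N₂) ≃* N₁) :=
        (nonempty_mulEquiv_congr (QuotientGroup.congr N₂ _ f rfl) (f.subgroupMap N₁)).symm

theorem Subgroup.card_comap {G G' : Type*} [Group G] [Group G'] (f : G →* G') (K : Subgroup G') :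
    Nat.card (K.comap f) = Nat.card f.ker * Nat.card (f.range ⊓ K : Subgroup G') := by
  set g := f.comp (K.comap f).subtype
  have hker : g.ker = f.ker.subgroupOf (K.comap f) := by
    rw [← MonoidHom.comap_ker]; rfl
  have hrange : g.range = f.range ⊓ K := by
    rw [MonoidHom.range_comp, Subgroup.range_subtype, Subgroup.map_comap_eq]
  rw [← g.ker.card_mul_index, Subgroup.index_ker, hrange, hker,
    Nat.card_congr (Subgroup.subgroupOfEquivOfLe (MonoidHom.ker_le_comap f K)).toEquiv]

noncomputable def torsionCard (q : ℕ) (H : Type*) [CommGroup H] : ℕ :=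
  Nat.card (powMonoidHom q : H →* H).ker

section Torsion

variable {H K : Type*} [CommGroup H] [CommGroup K]

theorem torsionCard_congr (f : H ≃* K) (q : ℕ) : torsionCard q H = torsionCard q K :=
  Nat.card_congr <| f.toEquiv.subtypeEquiv fun x => by
    simp [MonoidHom.mem_ker, ← map_pow, f.map_eq_one_iff]

theorem torsionCard_eq_card {q : ℕ} (h : ∀ x : H, x ^ q = 1) :
    torsionCard q H = Nat.card H := by
  rw [torsionCard, MonoidHom.ker_eq_top_iff.mpr (MonoidHom.ext h), Subgroup.card_top]

theorem torsionCard_pi {ι : Type*} [Fintype ι] (M : ι → Type*) [∀ i, CommGroup (M i)] (q : ℕ) :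
    torsionCard q (Π i, M i) = ∏ i, torsionCard q (M i) := by
  simp only [torsionCard, ← Nat.card_pi]
  refine Nat.card_congr <| (Equiv.subtypeEquivRight fun x => ?_).trans
    (Equiv.subtypePiEquivPi (p := fun i (y : M i) => y ^ q = 1))
  simp [MonoidHom.mem_ker, funext_iff]

theorem torsionCard_zmod_prime_pow {p : ℕ} (hp : p.Prime) (c k : ℕ) :
    torsionCard (p ^ k) (Multiplicative (ZMod (p ^ c))) = p ^ min c k := by
  have : NeZero (p ^ c) := ⟨pow_ne_zero _ hp.ne_zero⟩
  rw [torsionCard, IsCyclic.card_powMonoidHom_ker, Nat.card_eq_fintype_card,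
    Fintype.card_multiplicative, ZMod.card]
  rcases le_total c k with h | h
  · rw [min_eq_left h, Nat.gcd_eq_left (pow_dvd_pow p h)]
  · rw [min_eq_right h, Nat.gcd_eq_right (pow_dvd_pow p h)]

theorem torsionCard_pi_zmod_prime_pow {p : ℕ} (hp : p.Prime) {ι : Type*} [Fintype ι]
    (c : ι → ℕ) (k : ℕ) :
    torsionCard (p ^ k) (Π i, Multiplicative (ZMod (p ^ c i))) = p ^ ∑ i, min (c i) k := by
  simp only [torsionCard_pi, torsionCard_zmod_prime_pow hp, Finset.prod_pow_eq_pow_sum]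

theorem card_ker_powMonoidHom_inf (N : Subgroup H) (q : ℕ) :
    Nat.card ((powMonoidHom q).ker ⊓ N : Subgroup H) = torsionCard q N := by
  have hker : (powMonoidHom q : N →* N).ker = ((powMonoidHom q).ker ⊓ N).subgroupOf N := by
    ext x
    simp [Subgroup.inf_subgroupOf_right, Subgroup.mem_subgroupOf, MonoidHom.mem_ker,
      ← OneMemClass.coe_eq_one (x := x ^ q)]
  rw [torsionCard, hker, Nat.card_congr (Subgroup.subgroupOfEquivOfLe inf_le_right).toEquiv]

theorem torsionCard_quotient_mul_card (N : Subgroup H) (q : ℕ) :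
    torsionCard q (H ⧸ N) * Nat.card N =
      torsionCard q H * Nat.card ((powMonoidHom q).range ⊓ N : Subgroup H) := by
  -- both sides are the order of `{x | x ^ q ∈ N}`
  have hcomap : (powMonoidHom q : H ⧸ N →* H ⧸ N).ker.comap (QuotientGroup.mk' N) =
      N.comap (powMonoidHom q) := by
    ext x
    simp [MonoidHom.mem_ker, ← QuotientGroup.mk_pow, QuotientGroup.eq_one_iff]
  have h := Subgroup.card_comap (QuotientGroup.mk' N) (powMonoidHom q).ker
  rw [hcomap, Subgroup.card_comap, QuotientGroup.ker_mk', QuotientGroup.range_mk',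
    top_inf_eq] at h
  rw [torsionCard, torsionCard, mul_comm, ← h]

end Torsion

section SumMin

open Finset

variable {ι κ : Type*} [Fintype ι] [Fintype κ] {c : ι → ℕ} {d : κ → ℕ}

theorem sum_min_succ (c : ι → ℕ) (k : ℕ) :
    ∑ i, min (c i) (k + 1) = ∑ i, min (c i) k + #{i | k < c i} := by
  rw [card_filter, ← sum_add_distrib]
  refine sum_congr rfl fun i _ => ?_
  split_ifs <;> omega

theorem card_filter_lt_eq_add (c : ι → ℕ) (a : ℕ) :
    #{i | a < c i} = #{i | c i = a + 1} + #{i | a + 1 < c i} := by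
  rw [card_filter, card_filter, card_filter, ← sum_add_distrib]
  refine sum_congr rfl fun i _ => ?_
  split_ifs <;> omega

theorem card_fiber_eq_of_sum_min_eq (h : ∀ k, ∑ i, min (c i) k = ∑ j, min (d j) k) (a : ℕ) :
    #{i | c i = a + 1} = #{j | d j = a + 1} := by
  have := sum_min_succ c a
  have := sum_min_succ c (a + 1)
  have := sum_min_succ d a
  have := sum_min_succ d (a + 1)
  have := card_filter_lt_eq_add c a
  have := card_filter_lt_eq_add d a
  have := h a
  have := h (a + 1)
  have := h (a + 1 + 1)
  omega

theorem exists_equiv_comp_eq_of_sum_min_eq (hc : ∀ i, 0 < c i) (hd : ∀ j, 0 < d j)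
    (h : ∀ k, ∑ i, min (c i) k = ∑ j, min (d j) k) : ∃ σ : κ ≃ ι, ∀ j, c (σ j) = d j := by
  classical
  have hfiber (a : ℕ) : Nonempty ({j // d j = a} ≃ {i // c i = a}) := by
    rw [← Fintype.card_eq, Fintype.card_subtype, Fintype.card_subtype]
    cases a with
    | zero => simp [(hc _).ne', (hd _).ne']
    | succ a => exact (card_fiber_eq_of_sum_min_eq h a).symm
  exact ⟨Equiv.ofFiberEquiv fun a => (hfiber a).some, Equiv.ofFiberEquiv_map _⟩

end SumMin
namespace IsPGroup

variable {p : ℕ} [Fact p.Prime] {H K : Type*} [CommGroup H] [CommGroup K] [Finite H] [Finite K]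

theorem exists_mulEquiv_pi_zmod (hH : IsPGroup p H) :
    ∃ (ι : Type) (_ : Fintype ι) (c : ι → ℕ),
      (∀ i, 0 < c i) ∧ Nonempty (H ≃* Π i, Multiplicative (ZMod (p ^ c i))) := by
  classical
  obtain ⟨ι, _, m, hm, ⟨f⟩⟩ := CommGroup.equiv_prod_multiplicative_zmod_of_finite H
  let M i := Multiplicative (ZMod (m i))
  have hpow (i : ι) : ∃ c, 0 < c ∧ m i = p ^ c := by
    have : NeZero (m i) := ⟨by have := hm i; omega⟩
    have hi : IsPGroup p (M i) :=
      hH.of_injective (f.symm.toMonoidHom.comp (MonoidHom.mulSingle M i))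
        (f.symm.injective.comp (Pi.mulSingle_injective (M := M) i))
    obtain ⟨c, hc⟩ := IsPGroup.iff_card.mp hi
    rw [Nat.card_eq_fintype_card, Fintype.card_multiplicative, ZMod.card] at hc
    refine ⟨c, Nat.pos_of_ne_zero ?_, hc⟩
    rintro rfl
    exact (hm i).ne' (by rw [hc, pow_zero])
  choose c hc hmc using hpow
  exact ⟨ι, inferInstance, c, hc, ⟨f.trans <| MulEquiv.piCongrRight fun i =>
    (ZMod.ringEquivCongr (hmc i)).toAddEquiv.toMultiplicative⟩⟩

theorem nonempty_mulEquiv_of_torsionCard_eq (hH : IsPGroup p H) (hK : IsPGroup p K)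
    (h : ∀ k, torsionCard (p ^ k) H = torsionCard (p ^ k) K) : Nonempty (H ≃* K) := by
  obtain ⟨ι, _, c, hc, ⟨f⟩⟩ := hH.exists_mulEquiv_pi_zmod
  obtain ⟨κ, _, d, hd, ⟨g⟩⟩ := hK.exists_mulEquiv_pi_zmod
  have hsum (k : ℕ) : ∑ i, min (c i) k = ∑ j, min (d j) k := by
    apply Nat.pow_right_injective (Fact.out : p.Prime).two_le
    simpa only [← torsionCard_pi_zmod_prime_pow Fact.out, ← torsionCard_congr f,
      ← torsionCard_congr g] using h k
  obtain ⟨σ, hσ⟩ := exists_equiv_comp_eq_of_sum_min_eq hc hd hsum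
  let reindex :
      (Π i, Multiplicative (ZMod (p ^ c i))) ≃* Π j, Multiplicative (ZMod (p ^ c (σ j))) :=
    { Equiv.piCongrLeft' _ σ.symm with map_mul' := fun _ _ => rfl }
  exact ⟨f.trans <| reindex.trans <| (MulEquiv.piCongrRight fun j =>
    (ZMod.ringEquivCongr (congrArg (p ^ ·) (hσ j))).toAddEquiv.toMultiplicative).trans g.symm⟩

end IsPGroup

abbrev Homocyclic (p e n : ℕ) : Type := Fin n → Multiplicative (ZMod (p ^ e))

namespace Homocyclic

variable {p e n : ℕ}

theorem pow_eq_one_of_le {k : ℕ} (hk : e ≤ k) (x : Homocyclic p e n) : x ^ p ^ k = 1 := by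
  obtain ⟨m, hm⟩ := pow_dvd_pow p hk
  rw [hm, pow_mul]
  convert one_pow m
  funext i
  apply Multiplicative.toAdd.injective
  rw [Pi.pow_apply, toAdd_pow, Pi.one_apply, toAdd_one, nsmul_eq_mul, Nat.cast_pow,
    ← Nat.cast_pow, ZMod.natCast_self, zero_mul]

theorem torsionCard_eq (hp : p.Prime) (k : ℕ) :
    torsionCard (p ^ k) (Homocyclic p e n) = p ^ (min e k * n) := by
  simpa [mul_comm] using torsionCard_pi_zmod_prime_pow hp (fun _ : Fin n => e) k

theorem card_eq (hp : p.Prime) : Nat.card (Homocyclic p e n) = p ^ (e * n) := by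
  rw [← torsionCard_eq_card (pow_eq_one_of_le le_rfl), torsionCard_eq hp, min_self]

theorem range_powMonoidHom (hp : p.Prime) (k : ℕ) :
    (powMonoidHom (p ^ k) : Homocyclic p e n →* _).range = (powMonoidHom (p ^ (e - k))).ker := by
  have : NeZero (p ^ e) := ⟨pow_ne_zero _ hp.ne_zero⟩
  refine Subgroup.eq_of_le_of_card_ge ?_ ?_
  · rintro _ ⟨x, rfl⟩
    rw [MonoidHom.mem_ker, powMonoidHom_apply, powMonoidHom_apply, ← pow_mul, ← pow_add]
    exact pow_eq_one_of_le (by omega) x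
  · have h := (powMonoidHom (p ^ k) : Homocyclic p e n →* _).ker.card_mul_index
    rw [Subgroup.index_ker, ← torsionCard, torsionCard_eq hp, card_eq hp] at h
    have hsplit : p ^ (min e k * n) * p ^ (min e (e - k) * n) = p ^ (e * n) := by
      rw [← pow_add, ← add_mul]
      congr 2
      omega
    rw [← torsionCard, torsionCard_eq hp]
    exact (Nat.eq_of_mul_eq_mul_left (pow_pos hp.pos _) (hsplit.trans h.symm)).le

theorem torsionCard_quotient_mul_card (hp : p.Prime) (N : Subgroup (Homocyclic p e n)) (k : ℕ) :
    torsionCard (p ^ k) (Homocyclic p e n ⧸ N) * Nat.card N =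
      p ^ (min e k * n) * torsionCard (p ^ (e - k)) N := by
  rw [_root_.torsionCard_quotient_mul_card, range_powMonoidHom hp, card_ker_powMonoidHom_inf,
    torsionCard_eq hp]

theorem torsionCard_quotient_eq_of_mulEquiv (hp : p.Prime) {N₁ N₂ : Subgroup (Homocyclic p e n)}
    (f : Homocyclic p e n ⧸ N₁ ≃* N₂) {k : ℕ} (hk : k ≤ e) :
    torsionCard (p ^ k) (Homocyclic p e n ⧸ N₂) = torsionCard (p ^ k) N₁ := by
  have hN₁ := N₁.card_eq_card_quotient_mul_card_subgroup
  rw [Nat.card_congr f.toEquiv, card_eq hp] at hN₁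
  have h₂ := torsionCard_quotient_mul_card hp N₂ k
  have h₁ := torsionCard_quotient_mul_card hp N₁ (e - k)
  rw [Nat.sub_sub_self hk, torsionCard_congr f] at h₁
  apply Nat.eq_of_mul_eq_mul_right (pow_pos hp.pos (e * n))
  calc torsionCard (p ^ k) (Homocyclic p e n ⧸ N₂) * p ^ (e * n)
      = torsionCard (p ^ k) (Homocyclic p e n ⧸ N₂) * Nat.card N₂ * Nat.card N₁ := by
        rw [hN₁, mul_assoc]
    _ = p ^ (min e k * n) * (torsionCard (p ^ (e - k)) N₂ * Nat.card N₁) := by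
        rw [h₂, mul_assoc]
    _ = p ^ (min e k * n) * p ^ (min e (e - k) * n) * torsionCard (p ^ k) N₁ := by
        rw [h₁, mul_assoc]
    _ = torsionCard (p ^ k) N₁ * p ^ (e * n) := by
        rw [mul_comm, ← pow_add, ← add_mul, min_eq_right hk, min_eq_right (Nat.sub_le e k),
          Nat.add_sub_cancel' hk]

theorem nonempty_quotient_mulEquiv (hp : p.Prime) {N₁ N₂ : Subgroup (Homocyclic p e n)}
    (f : Homocyclic p e n ⧸ N₁ ≃* N₂) : Nonempty (Homocyclic p e n ⧸ N₂ ≃* N₁) := by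
  have : Fact p.Prime := ⟨hp⟩
  have hA : IsPGroup p (Homocyclic p e n) := fun x => ⟨e, pow_eq_one_of_le le_rfl x⟩
  refine (hA.to_quotient N₂).nonempty_mulEquiv_of_torsionCard_eq (hA.to_subgroup N₁) fun k => ?_
  have hquot {k : ℕ} (hk : e ≤ k) (x : Homocyclic p e n ⧸ N₂) : x ^ p ^ k = 1 :=
    QuotientGroup.induction_on x fun a => by
      rw [← QuotientGroup.mk_pow, pow_eq_one_of_le hk, QuotientGroup.mk_one]
  have hsub {k : ℕ} (hk : e ≤ k) (x : N₁) : x ^ p ^ k = 1 :=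
    OneMemClass.coe_eq_one.mp (pow_eq_one_of_le hk (x : Homocyclic p e n))
  rcases le_total k e with hk | hk
  · exact torsionCard_quotient_eq_of_mulEquiv hp f hk
  · rw [torsionCard_eq_card (hquot hk), torsionCard_eq_card (hsub hk),
      ← torsionCard_eq_card (hquot le_rfl), ← torsionCard_eq_card (hsub le_rfl)]
    exact torsionCard_quotient_eq_of_mulEquiv hp f le_rfl

theorem isMorphic (hp : p.Prime) : IsMorphic (Homocyclic p e n) := fun _ _ _ _ =>
  ⟨fun ⟨f⟩ => nonempty_quotient_mulEquiv hp f, fun ⟨f⟩ => nonempty_quotient_mulEquiv hp f⟩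

end Homocyclic

theorem homocyclic_isMorphic_general (p : ℕ) (hp : p.Prime) (G : Type*) [Group G]
    (n e : ℕ)
    (hG : Nonempty (G ≃* (Fin n → Multiplicative (ZMod (p ^ e))))) :
    IsMorphic G :=
  (Homocyclic.isMorphic hp).of_mulEquiv hG.some

/-- Every finite homocyclic abelian `p`-group is morphic. -/
theorem homocyclic_isMorphic (p : ℕ) (hp : p.Prime) (G : Type*) [Group G] [Finite G]
    (n e : ℕ)
    (hG : Nonempty (G ≃* (Fin n → Multiplicative (ZMod (p ^ e))))) :
    IsMorphic G :=
  homocyclic_isMorphic_general p hp G n e hG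
end

section
/- Let G be a finite nonabelian ea-morphic p-group and K = ⋂{M' : M maximal subgroup of G}. Then [G, Φ(G)] ≤ K; in particular Φ(G)' ≤ K. -/
/-! For a maximal subgroup `M` of `G` (normal, of index `p`), the quotient `G/M` is elementary
abelian, so `G` has an epimorphism `φ : G → M` whose kernel has order `p`. Then `M' = φ(G')`,
hence `|G' : M'|` divides `p`. In `Q = G/M'` the derived subgroup is therefore a normal subgroup
of order at most `p`: it is central and of exponent `p`, so `p`-th powers are central as well,
`Q/Z(Q)` is elementary abelian, and `Φ(Q) ≤ Z(Q)`. As `Φ(G)` maps into `Φ(Q)`, this says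
`[G, Φ(G)] ≤ M'`. -/

/-- A group is elementary abelian for the prime `p` if it is commutative and every
element has order dividing `p`. -/
def IsElementaryAbelian (p : ℕ) (G : Type*) [Group G] : Prop :=
  (∀ a b : G, a * b = b * a) ∧ ∀ g : G, g ^ p = 1

/-- A finite `p`-group `G` is ea-morphic if, whenever `N ⊴ G` with `N` elementary abelian
or `G/N` elementary abelian, there is an epimorphism `φ : G → N` with `G/N ≅ ker φ`. -/
def IsEAMorphic (p : ℕ) (G : Type*) [Group G] : Prop :=
  ∀ N : Subgroup G, ∀ _hN : N.Normal,
    (IsElementaryAbelian p N ∨ IsElementaryAbelian p (G ⧸ N)) →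
    ∃ φ : G →* N, Function.Surjective φ ∧ Nonempty ((G ⧸ N) ≃* φ.ker)

/-- The derived subgroup of a subgroup `M` of `G`, viewed as a subgroup of `G`. -/
def derivedIn {G : Type*} [Group G] (M : Subgroup G) : Subgroup G :=
  (commutator ↥M).map M.subtype

open Subgroup MulAction
open scoped commutatorElement

theorem IsElementaryAbelian.frattini_eq_bot {p : ℕ} (hp : p.Prime) {A : Type*} [Group A]
    (hA : IsElementaryAbelian p A) : frattini A = ⊥ := by
  have := Fact.mk hp
  let _ : CommGroup A := { mul_comm := hA.1 }
  let _ : Module (ZMod p) (Additive A) := AddCommGroup.zmodModule (n := p) fun a => hA.2 a.toMul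
  refine eq_bot_iff.mpr fun g hg => ?_
  by_contra hg1
  -- A functional on the `𝔽_p`-space `A` with value `1` at `g` has a kernel of index `p`
  -- that misses `g`.
  obtain ⟨f, hf⟩ := Module.Projective.exists_dual_eq_one (ZMod p) (x := Additive.ofMul g) hg1
  let χ : A →* Multiplicative (ZMod p) := AddMonoidHom.toMultiplicativeRight f.toAddMonoidHom
  have hχ : Function.Surjective χ := fun y =>
    ⟨(y.toAdd • Additive.ofMul g).toMul, by simp [χ, hf]⟩
  have : IsSimpleGroup (Multiplicative (ZMod p)) := isSimpleGroup_of_prime_card (p := p) (by simp)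
  have hker : IsCoatom χ.ker := χ.comap_bot ▸ isCoatom_comap_of_surjective hχ isCoatom_bot
  have hgχ : f (Additive.ofMul g) = 0 := frattini_le_coatom hker hg
  exact one_ne_zero (hf ▸ hgχ)

theorem frattini_le_of_isElementaryAbelian_quotient {p : ℕ} (hp : p.Prime) {G : Type*} [Group G]
    {N : Subgroup G} [N.Normal] (hN : IsElementaryAbelian p (G ⧸ N)) : frattini G ≤ N := by
  have := frattini_le_comap_frattini_of_surjective (QuotientGroup.mk'_surjective N)
  rwa [hN.frattini_eq_bot hp, MonoidHom.comap_bot, QuotientGroup.ker_mk'] at this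

theorem isElementaryAbelian_of_card_eq_prime {p : ℕ} (hp : p.Prime) {A : Type*} [Group A]
    (hA : Nat.card A = p) : IsElementaryAbelian p A := by
  have := Fact.mk hp
  have := isCyclic_of_prime_card hA
  exact ⟨IsCyclic.commGroup.mul_comm, fun a => hA ▸ pow_card_eq_one'⟩

namespace IsPGroup

variable {p : ℕ} {G : Type*} [Group G] [Finite G]

theorem normal_of_isCoatom [Fact p.Prime] (hpG : IsPGroup p G) {M : Subgroup G}
    (hM : IsCoatom M) : M.Normal :=
  have := hpG.isNilpotent
  NormalizerCondition.normal_of_coatom M Group.normalizerCondition_of_isNilpotent hM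

theorem card_quotient_eq_of_isCoatom [Fact p.Prime] (hpG : IsPGroup p G) {M : Subgroup G}
    [M.Normal] (hM : IsCoatom M) : Nat.card (G ⧸ M) = p := by
  have : Nontrivial (G ⧸ M) := QuotientGroup.nontrivial_iff.mpr hM.1
  obtain ⟨x, hx⟩ : ∃ x : G ⧸ M, orderOf x = p := exists_prime_orderOf_dvd_card' p
    ((hpG.to_quotient M).card_eq_or_dvd.resolve_left Finite.one_lt_card.ne')
  have hx1 : x ≠ 1 := fun h => (Fact.out : p.Prime).one_lt.ne' (by rw [← hx, h, orderOf_one])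
  have hcomap : (zpowers x).comap (QuotientGroup.mk' M) = ⊤ := by
    refine hM.2 _ (lt_of_le_of_ne (QuotientGroup.le_comap_mk' M _) fun h => hx1 ?_)
    obtain ⟨g, rfl⟩ := QuotientGroup.mk'_surjective M x
    have hg : g ∈ (zpowers (QuotientGroup.mk' M g)).comap (QuotientGroup.mk' M) := mem_zpowers _
    exact (QuotientGroup.eq_one_iff g).mpr (h ▸ hg)
  have htop : zpowers x = ⊤ :=
    comap_injective (QuotientGroup.mk'_surjective M) (hcomap.trans (comap_top _).symm)
  rw [← hx, ← Nat.card_zpowers, htop, card_top]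

theorem le_center_of_card_dvd_prime [Fact p.Prime] (hpG : IsPGroup p G) {D : Subgroup G}
    [D.Normal] (hD : Nat.card D ∣ p) : D ≤ center G := by
  rcases (Fact.out : p.Prime).eq_one_or_self_of_dvd _ hD with hD1 | hDp
  · rw [card_eq_one.mp hD1]
    exact bot_le
  -- `1` is fixed by conjugation and the number of fixed points is `≡ |D| = p [MOD p]`.
  have hcard := (hpG.of_equiv ConjAct.toConjAct).card_modEq_card_fixedPoints D
  rw [hDp] at hcard
  have hfix : fixedPoints (ConjAct G) D = Set.univ := by
    have hdvd : p ∣ Nat.card (fixedPoints (ConjAct G) D) :=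
      (Nat.modEq_zero_iff_dvd.mp (hcard.symm.trans (Nat.modEq_zero_iff_dvd.mpr dvd_rfl)))
    have : Nonempty (fixedPoints (ConjAct G) D) := ⟨⟨1, fun g => smul_one g⟩⟩
    refine Set.eq_of_subset_of_ncard_le (Set.subset_univ _) ?_
    rw [Set.ncard_univ, hDp, ← Nat.card_coe_set_eq]
    exact Nat.le_of_dvd Nat.card_pos hdvd
  intro d hd
  refine mem_center_iff.mpr fun g => ?_
  have hmem : (⟨d, hd⟩ : D) ∈ fixedPoints (ConjAct G) D := hfix ▸ Set.mem_univ _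
  have hconj := congrArg Subtype.val (hmem (ConjAct.toConjAct g))
  rw [ConjAct.Subgroup.val_conj_smul, ConjAct.toConjAct_smul] at hconj
  exact (eq_mul_inv_iff_mul_eq.mp hconj.symm).symm

end IsPGroup

section CentralCommutator

variable {p : ℕ} {Q : Type*} [Group Q]

theorem pow_mem_center_of_commutator_le_center (hcent : commutator Q ≤ center Q)
    (hexp : ∀ x ∈ commutator Q, x ^ p = 1) (g : Q) : g ^ p ∈ center Q := by
  refine mem_center_iff.mpr fun h => ?_
  have hd : ⁅h, g⁆ ∈ commutator Q := commutator_mem_commutator (mem_top h) (mem_top g)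
  have hconj : h * g * h⁻¹ = ⁅h, g⁆ * g := by group
  have hcomm : Commute ⁅h, g⁆ g := (mem_center_iff.mp (hcent hd) g).symm
  calc h * g ^ p = (h * g * h⁻¹) ^ p * h := by rw [conj_pow, inv_mul_cancel_right]
    _ = g ^ p * h := by rw [hconj, hcomm.mul_pow, hexp _ hd, one_mul]

theorem isElementaryAbelian_quotient_center (hcent : commutator Q ≤ center Q)
    (hexp : ∀ x ∈ commutator Q, x ^ p = 1) : IsElementaryAbelian p (Q ⧸ center Q) := by
  have := Normal.quotient_commutative_iff_commutator_le.mpr hcent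
  refine ⟨this.is_comm.comm, fun a => ?_⟩
  obtain ⟨g, rfl⟩ := QuotientGroup.mk_surjective a
  rw [← QuotientGroup.mk_pow, QuotientGroup.eq_one_iff]
  exact pow_mem_center_of_commutator_le_center hcent hexp g

end CentralCommutator

theorem Subgroup.card_map_mul_card_ker_inf {G H : Type*} [Group G] [Group H] (f : G →* H)
    (K : Subgroup G) :
    Nat.card (K.map f) * Nat.card (f.ker ⊓ K : Subgroup G) = Nat.card K := by
  rw [← relIndex_ker, ← inf_relIndex_right, ← relIndex_bot_left, ← relIndex_bot_left, mul_comm,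
    relIndex_mul_relIndex _ _ _ bot_le inf_le_right]

section DerivedIn

variable {G : Type*} [Group G]

theorem derivedIn_eq_commutator (M : Subgroup G) : derivedIn M = ⁅M, M⁆ := by
  rw [derivedIn, commutator_def, map_commutator, ← MonoidHom.range_eq_map, range_subtype]

instance derivedIn_normal (M : Subgroup G) [M.Normal] : (derivedIn M).Normal :=
  derivedIn_eq_commutator M ▸ inferInstance

theorem derivedIn_eq_map_commutator {M : Subgroup G} (φ : G →* M)
    (hφ : Function.Surjective φ) : derivedIn M = (commutator G).map (M.subtype.comp φ) := by
  rw [← map_map, map_commutator_eq, φ.range_eq_top.mpr hφ, derivedIn, commutator_def]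

theorem card_commutator_quotient_derivedIn_dvd [Finite G] {M : Subgroup G} [M.Normal]
    (φ : G →* M) (hφ : Function.Surjective φ) :
    Nat.card (commutator (G ⧸ derivedIn M)) ∣ Nat.card φ.ker := by
  set C := derivedIn M
  have hCle : C ≤ commutator G :=
    (derivedIn_eq_commutator M).trans_le (commutator_mono le_top le_top)
  -- Both `|M'| * |ker φ ⊓ G'|` and `|G'/M'| * |M'|` count `G'`.
  have hψ := card_map_mul_card_ker_inf (M.subtype.comp φ) (commutator G)
  have hπ := card_map_mul_card_ker_inf (QuotientGroup.mk' C) (commutator G)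
  rw [← derivedIn_eq_map_commutator φ hφ, MonoidHom.ker_comp_of_injective _ _ M.subtype_injective]
    at hψ
  rw [QuotientGroup.ker_mk', inf_of_le_left hCle, map_commutator_eq,
    (QuotientGroup.mk' C).range_eq_top.mpr (QuotientGroup.mk'_surjective C), ← commutator_def,
    ← hψ, mul_comm] at hπ
  rw [Nat.eq_of_mul_eq_mul_left Nat.card_pos hπ]
  exact card_dvd_of_le inf_le_left

end DerivedIn

theorem commutator_top_le_of_le_comap_center {G : Type*} [Group G] {N H : Subgroup G}
    [N.Normal] (hH : H ≤ (center (G ⧸ N)).comap (QuotientGroup.mk' N)) :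
    ⁅(⊤ : Subgroup G), H⁆ ≤ N := by
  have hmap : ⁅(⊤ : Subgroup G), H⁆.map (QuotientGroup.mk' N) ≤ ⊥ := by
    rw [map_commutator]
    exact (commutator_mono le_top (map_le_iff_le_comap.mpr hH)).trans
      (commutator_center_right _).le
  rwa [map_le_iff_le_comap, MonoidHom.comap_bot, QuotientGroup.ker_mk'] at hmap

theorem IsEAMorphic.commutator_frattini_le_derivedIn {p : ℕ} (hp : p.Prime) {G : Type*}
    [Group G] [Finite G] (hpG : IsPGroup p G) (hea : IsEAMorphic p G) {M : Subgroup G}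
    (hM : IsCoatom M) :
    ⁅(⊤ : Subgroup G), frattini G⁆ ≤ derivedIn M := by
  have := Fact.mk hp
  have := hpG.normal_of_isCoatom hM
  have hcard := hpG.card_quotient_eq_of_isCoatom hM
  obtain ⟨φ, hφ, ⟨e⟩⟩ :=
    hea M inferInstance (Or.inr (isElementaryAbelian_of_card_eq_prime hp hcard))
  set Q := G ⧸ derivedIn M
  have hD : Nat.card (commutator Q) ∣ p :=
    hcard ▸ Nat.card_congr e.toEquiv ▸ card_commutator_quotient_derivedIn_dvd φ hφ
  have hcent : commutator Q ≤ center Q :=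
    (hpG.to_quotient (derivedIn M)).le_center_of_card_dvd_prime hD
  have hexp : ∀ x ∈ commutator Q, x ^ p = 1 := fun x hx =>
    orderOf_dvd_iff_pow_eq_one.mp (((commutator Q).orderOf_dvd_natCard hx).trans hD)
  have hΦ : frattini Q ≤ center Q := frattini_le_of_isElementaryAbelian_quotient hp
    (isElementaryAbelian_quotient_center hcent hexp)
  exact commutator_top_le_of_le_comap_center
    ((frattini_le_comap_frattini_of_surjective (QuotientGroup.mk'_surjective _)).trans
      (comap_mono hΦ))

theorem commutator_frattini_le_K_general (p : ℕ) (hp : p.Prime) (G : Type*) [Group G] [Finite G]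
    (hpG : IsPGroup p G) (hea : IsEAMorphic p G) :
    (⁅(⊤ : Subgroup G), frattini G⁆ ≤ ⨅ (M : Subgroup G) (_ : IsCoatom M), derivedIn M) ∧
      (derivedIn (frattini G) ≤ ⨅ (M : Subgroup G) (_ : IsCoatom M), derivedIn M) := by
  have hK : ⁅(⊤ : Subgroup G), frattini G⁆ ≤ ⨅ (M : Subgroup G) (_ : IsCoatom M), derivedIn M :=
    le_iInf₂ fun _ hM => hea.commutator_frattini_le_derivedIn hp hpG hM
  refine ⟨hK, le_trans ?_ hK⟩
  rw [derivedIn_eq_commutator]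
  exact commutator_mono le_top le_rfl

/-- Let `G` be a finite nonabelian ea-morphic `p`-group and
`K = ⋂ {M' : M maximal subgroup of G}`. Then `[G, Φ(G)] ≤ K`; in particular
`Φ(G)' ≤ K`. -/
theorem commutator_frattini_le_K (p : ℕ) (hp : p.Prime) (G : Type*) [Group G] [Finite G]
    (hpG : IsPGroup p G) (hea : IsEAMorphic p G) (hnab : ¬ ∀ a b : G, a * b = b * a) :
    (⁅(⊤ : Subgroup G), frattini G⁆ ≤ ⨅ (M : Subgroup G) (_ : IsCoatom M), derivedIn M) ∧
      (derivedIn (frattini G) ≤ ⨅ (M : Subgroup G) (_ : IsCoatom M), derivedIn M) :=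
  commutator_frattini_le_K_general p hp G hpG hea
end

section
/- Let (V, W, β) be a morphic triple and U a maximal subspace of V. Fix a ∈ V \ U. Then the linear map τ: U → W/U' given by x ↦ [a,x] + U' is surjective with kernel T = {x ∈ U : [a,x] ∈ U'} a maximal subspace of U. -/
open Module

variable {p : ℕ}

/-- The "derived" subspace `[U₁, U₂]`: the span of the values `β x y` for
`x ∈ U₁`, `y ∈ U₂`. -/
def pairSpan {V W : Type*} [AddCommGroup V] [Module (ZMod p) V]
    [AddCommGroup W] [Module (ZMod p) W]
    (β : V →ₗ[ZMod p] V →ₗ[ZMod p] W) (U₁ U₂ : Submodule (ZMod p) V) :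
    Submodule (ZMod p) W :=
  Submodule.span (ZMod p) {w | ∃ x ∈ U₁, ∃ y ∈ U₂, β x y = w}

/-- `U' = [U, U]`. -/
def der {V W : Type*} [AddCommGroup V] [Module (ZMod p) V]
    [AddCommGroup W] [Module (ZMod p) W]
    (β : V →ₗ[ZMod p] V →ₗ[ZMod p] W) (U : Submodule (ZMod p) V) :
    Submodule (ZMod p) W :=
  pairSpan β U U

/-- `(V, W, β)` is a morphic triple if `β` is alternating, `V' = W`, `U'` is a maximal
subspace of `W` for every maximal subspace `U` of `V`, and the intersection of all
such `U'` is zero. -/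
def IsMorphicTriple {V W : Type*} [AddCommGroup V] [Module (ZMod p) V]
    [AddCommGroup W] [Module (ZMod p) W]
    (β : V →ₗ[ZMod p] V →ₗ[ZMod p] W) : Prop :=
  (∀ v : V, β v v = 0) ∧
  der β ⊤ = ⊤ ∧
  (∀ U : Submodule (ZMod p) V, IsCoatom U → IsCoatom (der β U)) ∧
  (⨅ (U : Submodule (ZMod p) V) (_ : IsCoatom U), der β U) = ⊥

/-- In a morphic triple, for `U` maximal in `V` and `a ∈ V \ U`, the linear map
`τ : U → W/U'`, `x ↦ [a,x] + U'`, is surjective, and its kernel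
`T = {x ∈ U : [a,x] ∈ U'}` is a maximal subspace of `U`. -/
theorem tau_surjective_ker_maximal [Fact p.Prime]
    {V W : Type*} [AddCommGroup V] [Module (ZMod p) V] [FiniteDimensional (ZMod p) V]
    [AddCommGroup W] [Module (ZMod p) W] [FiniteDimensional (ZMod p) W]
    (β : V →ₗ[ZMod p] V →ₗ[ZMod p] W) (hβ : IsMorphicTriple β)
    (U : Submodule (ZMod p) V) (hU : IsCoatom U) (a : V) (ha : a ∉ U) :
    Function.Surjective
        ((der β U).mkQ.comp ((β a).comp U.subtype)) ∧
      (((LinearMap.ker ((der β U).mkQ.comp ((β a).comp U.subtype))).map U.subtype : Set V)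
          = {x : V | x ∈ U ∧ β a x ∈ der β U}) ∧
      ((LinearMap.ker ((der β U).mkQ.comp ((β a).comp U.subtype))).map U.subtype) ⋖ U := by
  obtain ⟨halt, htop, hcoatom, -⟩ := hβ
  have hskew : ∀ x y : V, β x y = - β y x := by
    intro x y
    have h := halt (x + y)
    simp only [map_add, LinearMap.add_apply, halt x, halt y, zero_add, add_zero] at h
    exact eq_neg_of_add_eq_zero_left (by rw [add_comm]; exact h)
  have hU' : IsCoatom (der β U) := hcoatom U hU
  haveI hsimple : IsSimpleModule (ZMod p) (W ⧸ der β U) :=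
    isSimpleModule_iff_isCoatom.mpr hU'
  set τ := (der β U).mkQ.comp ((β a).comp U.subtype) with hτ
  have hsup : U ⊔ Submodule.span (ZMod p) {a} = ⊤ := by
    apply hU.2
    refine lt_of_le_of_ne le_sup_left ?_
    intro h
    exact ha (h ▸ Submodule.mem_sup_right (Submodule.mem_span_singleton_self a))
  have hsurj : Function.Surjective τ := by
    rw [← LinearMap.range_eq_top]
    rcases eq_bot_or_eq_top (LinearMap.range τ) with hr | hr
    · exfalso
      have hker : ∀ x ∈ U, β a x ∈ der β U := by
        intro x hx
        have h0 : τ ⟨x, hx⟩ = 0 := by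
          have := LinearMap.mem_range_self τ ⟨x, hx⟩
          rw [hr] at this
          simpa using this
        simpa [hτ, Submodule.Quotient.mk_eq_zero] using h0
      have hle : der β ⊤ ≤ der β U := by
        rw [der, pairSpan]
        apply Submodule.span_le.mpr
        rintro w ⟨x, -, y, -, rfl⟩
        have hx : x ∈ U ⊔ Submodule.span (ZMod p) {a} := hsup ▸ Submodule.mem_top
        have hy : y ∈ U ⊔ Submodule.span (ZMod p) {a} := hsup ▸ Submodule.mem_top
        obtain ⟨u, hu, s, hs, rfl⟩ := Submodule.mem_sup.mp hx
        obtain ⟨u', hu', s', hs', rfl⟩ := Submodule.mem_sup.mp hy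
        obtain ⟨c, rfl⟩ := Submodule.mem_span_singleton.mp hs
        obtain ⟨c', rfl⟩ := Submodule.mem_span_singleton.mp hs'
        have h1 : β u u' ∈ der β U := Submodule.subset_span ⟨u, hu, u', hu', rfl⟩
        have h2 : β a u' ∈ der β U := hker u' hu'
        have h3 : β u a ∈ der β U := by
          rw [hskew u a]; exact neg_mem (hker u hu)
        show β (u + c • a) (u' + c' • a) ∈ der β U
        simp only [map_add, map_smul, LinearMap.add_apply, LinearMap.smul_apply, halt a,
          smul_zero, add_zero]
        exact add_mem (add_mem h1 (Submodule.smul_mem _ _ h2))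
          (Submodule.smul_mem _ _ h3)
      rw [htop] at hle
      exact hU'.1 (top_le_iff.mp hle)
    · exact hr
  refine ⟨hsurj, ?_, ?_⟩
  · ext x
    simp only [Set.mem_setOf_eq, SetLike.mem_coe, Submodule.mem_map, LinearMap.mem_ker]
    constructor
    · rintro ⟨⟨y, hy⟩, hk, rfl⟩
      exact ⟨hy, by simpa [hτ, Submodule.Quotient.mk_eq_zero] using hk⟩
    · rintro ⟨hx, hb⟩
      exact ⟨⟨x, hx⟩, by simpa [hτ, Submodule.Quotient.mk_eq_zero] using hb, rfl⟩
  · have hTle : (LinearMap.ker τ).map U.subtype ≤ U := Submodule.map_subtype_le _ _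
    rw [covBy_iff_quot_is_simple hTle,
      Submodule.comap_map_eq_of_injective U.injective_subtype]
    exact IsSimpleModule.congr (τ.quotKerEquivOfSurjective hsurj)
end

section
/- Let (V, W, β) be a morphic triple and U a maximal subspace of V. Then the subspace T(U) = {x ∈ U : [a,x] ∈ U'} (for a ∈ V \ U) is independent of the choice of a ∈ V \ U. -/
open Module

variable {p : ℕ}

lemma T_subset_aux {p : ℕ}
    {V W : Type*} [AddCommGroup V] [Module (ZMod p) V]
    [AddCommGroup W] [Module (ZMod p) W]
    (β : V →ₗ[ZMod p] V →ₗ[ZMod p] W)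
    (U : Submodule (ZMod p) V) (hU : IsCoatom U)
    (a b : V) (ha : a ∉ U) :
    {x : V | x ∈ U ∧ β a x ∈ der β U} ⊆ {x : V | x ∈ U ∧ β b x ∈ der β U} := by
  have hsup : U ⊔ Submodule.span (ZMod p) {a} = ⊤ := by
    apply hU.2
    refine lt_of_le_of_ne le_sup_left ?_
    intro h
    exact ha (h ▸ le_sup_right (a := U) (Submodule.mem_span_singleton_self a))
  have hbmem : b ∈ U ⊔ Submodule.span (ZMod p) {a} := hsup ▸ Submodule.mem_top
  obtain ⟨u, hu, z, hz, hbz⟩ := Submodule.mem_sup.mp hbmem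
  obtain ⟨c, rfl⟩ := Submodule.mem_span_singleton.mp hz
  rintro x ⟨hxU, hax⟩
  refine ⟨hxU, ?_⟩
  have : β b x = β u x + c • β a x := by
    rw [← hbz]; simp
  rw [this]
  exact Submodule.add_mem _ (Submodule.subset_span ⟨u, hu, x, hxU, rfl⟩)
    (Submodule.smul_mem _ c hax)

/-- In a morphic triple, the subspace `T(U) = {x ∈ U : [a,x] ∈ U'}` does not depend
on the choice of `a ∈ V \ U`. -/
theorem T_independent_of_a [Fact p.Prime]
    {V W : Type*} [AddCommGroup V] [Module (ZMod p) V] [FiniteDimensional (ZMod p) V]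
    [AddCommGroup W] [Module (ZMod p) W] [FiniteDimensional (ZMod p) W]
    (β : V →ₗ[ZMod p] V →ₗ[ZMod p] W) (hβ : IsMorphicTriple β)
    (U : Submodule (ZMod p) V) (hU : IsCoatom U)
    (a b : V) (ha : a ∉ U) (hb : b ∉ U) :
    {x : V | x ∈ U ∧ β a x ∈ der β U} = {x : V | x ∈ U ∧ β b x ∈ der β U} := by
  exact subset_antisymm (T_subset_aux β U hU a b ha) (T_subset_aux β U hU b a hb)
end

section
/- Let (V, W, β) be a morphic triple, U a maximal subspace of V, and T = T(U) = {x ∈ U : [a,x] ∈ U'} for some fixed a ∈ V \ U. Then for any maximal subspace S of V: S' = U' if and only if T ≤ S. -/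
open Module

variable {p : ℕ}

/-- In a morphic triple, with `U` maximal in `V`, `a ∈ V \ U` and
`T = {x ∈ U : [a,x] ∈ U'}`, a maximal subspace `S` of `V` satisfies `S' = U'`
if and only if `T ⊆ S`. -/
theorem der_eq_iff_T_le [Fact p.Prime]
    {V W : Type*} [AddCommGroup V] [Module (ZMod p) V] [FiniteDimensional (ZMod p) V]
    [AddCommGroup W] [Module (ZMod p) W] [FiniteDimensional (ZMod p) W]
    (β : V →ₗ[ZMod p] V →ₗ[ZMod p] W) (hβ : IsMorphicTriple β)
    (U : Submodule (ZMod p) V) (hU : IsCoatom U) (a : V) (ha : a ∉ U)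
    (S : Submodule (ZMod p) V) (hS : IsCoatom S) :
    der β S = der β U ↔ {x : V | x ∈ U ∧ β a x ∈ der β U} ⊆ (S : Set V) := by
  obtain ⟨alt, htop, hcoat, -⟩ := hβ
  have skew : ∀ x y : V, β x y = - β y x := by
    intro x y
    have h := alt (x + y)
    simp only [map_add, LinearMap.add_apply, alt, add_zero, zero_add] at h
    rw [add_comm] at h
    exact eq_neg_of_add_eq_zero_left h
  have hmem : ∀ (M : Submodule (ZMod p) V) (x y : V), x ∈ M → y ∈ M → β x y ∈ der β M :=
    fun M x y hx hy => Submodule.subset_span ⟨x, hx, y, hy, rfl⟩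
  have hdec : ∀ (M : Submodule (ZMod p) V) (x : V), IsCoatom M → x ∉ M →
      ∀ v : V, ∃ m ∈ M, ∃ c : ZMod p, v = m + c • x := by
    intro M x hM hx v
    have hsup : M ⊔ Submodule.span (ZMod p) {x} = ⊤ :=
      hM.2 _ (left_lt_sup.2 fun h => hx (h (Submodule.mem_span_singleton_self x)))
    have hv : v ∈ M ⊔ Submodule.span (ZMod p) {x} := by rw [hsup]; trivial
    rw [Submodule.mem_sup] at hv
    obtain ⟨m, hm, z, hz, hv⟩ := hv
    rw [Submodule.mem_span_singleton] at hz
    obtain ⟨c, rfl⟩ := hz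
    exact ⟨m, hm, c, hv.symm⟩
  constructor
  · -- forward: der β S = der β U → T ⊆ S
    intro hd t ht
    obtain ⟨htU, hta⟩ := ht
    by_contra hts
    have key : ∀ z ∈ S, β t z ∈ der β U := by
      intro z hz
      obtain ⟨u, hu, d, rfl⟩ := hdec U a hU ha z
      have h1 : β t u ∈ der β U := hmem U t u htU hu
      have h2 : β t a ∈ der β U := by
        rw [skew t a]
        exact neg_mem hta
      have : β t (u + d • a) = β t u + d • β t a := by
        rw [map_add, map_smul]
      rw [this]
      exact add_mem h1 (Submodule.smul_mem _ _ h2)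
    have hle : der β (⊤ : Submodule (ZMod p) V) ≤ der β U := by
      apply Submodule.span_le.2
      rintro w ⟨x, -, y, -, rfl⟩
      obtain ⟨s, hs, c, rfl⟩ := hdec S t hS hts x
      obtain ⟨s', hs', c', rfl⟩ := hdec S t hS hts y
      have expand : β (s + c • t) (s' + c' • t) =
          β s s' + c' • β s t + (c • β t s' + (c' * c) • β t t) := by
        simp only [map_add, map_smul, LinearMap.add_apply, LinearMap.smul_apply,
          smul_add, smul_smul]
        abel
      rw [expand, alt t, smul_zero, add_zero]
      have h1 : β s s' ∈ der β U := hd ▸ hmem S s s' hs hs'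
      have h2 : β s t ∈ der β U := by
        rw [skew s t]; exact neg_mem (key s hs)
      exact add_mem (add_mem h1 (Submodule.smul_mem _ _ h2))
        (Submodule.smul_mem _ _ (key s' hs'))
    rw [htop, top_le_iff] at hle
    exact (hcoat U hU).1 hle
  · -- backward: T ⊆ S → der β S = der β U
    intro hT
    by_cases hcase : ∀ u, u ∈ S → u ∈ U → β a u ∈ der β U
    · by_cases hSU : ∃ s ∈ S, s ∉ U
      · obtain ⟨s, hsS, hsU⟩ := hSU
        have key2 : ∀ z, z ∈ S → z ∈ U → β s z ∈ der β U := by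
          intro z hzS hzU
          obtain ⟨v, hv, lam, rfl⟩ := hdec U a hU ha s
          have : β (v + lam • a) z = β v z + lam • β a z := by
            rw [map_add, map_smul]; rfl
          rw [this]
          exact add_mem (hmem U v z hv hzU) (Submodule.smul_mem _ _ (hcase z hzS hzU))
        have hle : der β S ≤ der β U := by
          apply Submodule.span_le.2
          rintro w ⟨x, hx, y, hy, rfl⟩
          obtain ⟨m, hmU, c, rfl⟩ := hdec U s hU hsU x
          obtain ⟨m', hmU', c', rfl⟩ := hdec U s hU hsU y
          have hmS : m ∈ S := by
            have : m = (m + c • s) - c • s := by abel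
            rw [this]
            exact sub_mem hx (Submodule.smul_mem _ _ hsS)
          have hmS' : m' ∈ S := by
            have : m' = (m' + c' • s) - c' • s := by abel
            rw [this]
            exact sub_mem hy (Submodule.smul_mem _ _ hsS)
          have expand : β (m + c • s) (m' + c' • s) =
              β m m' + c' • β m s + (c • β s m' + (c' * c) • β s s) := by
            simp only [map_add, map_smul, LinearMap.add_apply, LinearMap.smul_apply,
              smul_add, smul_smul]
            abel
          rw [expand, alt s, smul_zero, add_zero]
          have h1 : β m m' ∈ der β U := hmem U m m' hmU hmU'
          have h2 : β m s ∈ der β U := by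
            rw [skew m s]; exact neg_mem (key2 m hmS hmU)
          exact add_mem (add_mem h1 (Submodule.smul_mem _ _ h2))
            (Submodule.smul_mem _ _ (key2 m' hmS' hmU'))
        exact hle.lt_or_eq.elim
          (fun h => absurd ((hcoat S hS).2 _ h) (hcoat U hU).1) id
      · push_neg at hSU
        have hSeqU : S = U := by
          have hle' : S ≤ U := fun x hx => hSU x hx
          rcases hle'.lt_or_eq with h | h
          · exact absurd (hS.2 _ h) hU.1
          · exact h
        rw [hSeqU]
    · push_neg at hcase
      obtain ⟨u₀, hu₀S, hu₀U, hu₀⟩ := hcase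
      have hspan : der β U ⊔ Submodule.span (ZMod p) {β a u₀} = ⊤ :=
        (hcoat U hU).2 _
          (left_lt_sup.2 fun h => hu₀ (h (Submodule.mem_span_singleton_self _)))
      have hUS : U ≤ S := by
        intro u huU
        have hmem' : β a u ∈ der β U ⊔ Submodule.span (ZMod p) {β a u₀} := by
          rw [hspan]; trivial
        rw [Submodule.mem_sup] at hmem'
        obtain ⟨w, hw, z, hz, hsum⟩ := hmem'
        rw [Submodule.mem_span_singleton] at hz
        obtain ⟨c, rfl⟩ := hz
        have hβw : β a (u - c • u₀) = w := by
          rw [map_sub, map_smul, ← hsum]; abel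
        have hmemT : u - c • u₀ ∈ S := by
          apply hT
          refine ⟨sub_mem huU (Submodule.smul_mem _ _ hu₀U), ?_⟩
          rw [hβw]; exact hw
        have : u = (u - c • u₀) + c • u₀ := by abel
        rw [this]
        exact add_mem hmemT (Submodule.smul_mem _ _ hu₀S)
      have hSeqU : U = S := by
        rcases hUS.lt_or_eq with h | h
        · exact absurd (hU.2 _ h) hS.1
        · exact h
      rw [hSeqU]
end

section
/- Let (V, W, β) be a morphic triple and U a maximal subspace of V. Then the set {S : S maximal subspace of V, S' = U'} has exactly p + 1 elements, namely the maximal subspaces S of V containing T(U). -/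
open Module

variable {p : ℕ}

/-!
For `a ∉ U`, the map `x ↦ β a x` sends `U` onto the line `W / U'`: otherwise
`V' = (U + ⟨a⟩)' = U' + β(a, U) ≤ U'`. So `T(U)` is a hyperplane of `U`, `V / T(U)` is a
plane, and a plane over `𝔽_p` has `p + 1` lines. For a maximal `S ≠ U` and `b ∈ S \ U`,
`S = (S ∩ U) + ⟨b⟩`, so `S' = (S ∩ U)' + β(b, S ∩ U)`; moreover `T(U)` does not change when
`a` is replaced by `b`. Hence `S' = U'` iff `S ∩ U ≤ T(U)`, iff `S ∩ U = T(U)` (both are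
hyperplanes of `U`), iff `T(U) ≤ S`.
-/

namespace Submodule

section DivisionRing

variable {K V W : Type*} [DivisionRing K] [AddCommGroup V] [Module K V]
  [AddCommGroup W] [Module K W]

theorem isCoatom_iff_finrank_quotient_eq_one {S : Submodule K V} :
    IsCoatom S ↔ finrank K (V ⧸ S) = 1 :=
  isSimpleModule_iff_isCoatom.symm.trans isSimpleModule_iff_finrank_eq_one

theorem exists_sub_smul_mem_of_isCoatom {S : Submodule K V} (hS : IsCoatom S) {x : V}
    (hx : x ∉ S) (y : V) : ∃ c : K, y - c • x ∈ S := by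
  have hy : y ∈ S ⊔ span K {x} := by
    rw [(isCompl_span_singleton_of_isCoatom_of_notMem hS hx).sup_eq_top]; trivial
  obtain ⟨s, hs, _, hcx, rfl⟩ := mem_sup.mp hy
  obtain ⟨c, rfl⟩ := mem_span_singleton.mp hcx
  exact ⟨c, by simpa using hs⟩

theorem finrank_inf_comap_add_one [FiniteDimensional K V] {S : Submodule K W}
    (hS : IsCoatom S) (f : V →ₗ[K] W) {U : Submodule K V} {x : V} (hxU : x ∈ U)
    (hx : f x ∉ S) : finrank K ↥(U ⊓ S.comap f) + 1 = finrank K U := by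
  have : IsSimpleModule K (W ⧸ S) := isSimpleModule_iff_isCoatom.mpr hS
  let g : U →ₗ[K] W ⧸ S := S.mkQ ∘ₗ f ∘ₗ U.subtype
  have hg : LinearMap.range g = ⊤ := by
    refine (eq_bot_or_eq_top _).resolve_left fun h => hx ?_
    have : g ⟨x, hxU⟩ = 0 := LinearMap.range_eq_bot.mp h ▸ rfl
    simpa [g] using this
  have hker : map U.subtype (LinearMap.ker g) = U ⊓ S.comap f := by
    rw [← map_comap_subtype]
    simp [g, LinearMap.ker_comp, comap_comp]
  rw [← LinearMap.finrank_range_add_finrank_ker g, hg, finrank_top,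
    isCoatom_iff_finrank_quotient_eq_one.mp hS, ← hker, finrank_map_subtype_eq, add_comm]

theorem finrank_inf_add_one_of_isCoatom [FiniteDimensional K V] {S U : Submodule K V}
    (hS : IsCoatom S) (hU : IsCoatom U) (hSU : S ≠ U) :
    finrank K ↥(S ⊓ U) + 1 = finrank K U := by
  obtain ⟨x, hxU, hxS⟩ := SetLike.not_le_iff_exists.mp fun h => hSU ((hU.le_iff_eq hS.1).mp h)
  have := finrank_inf_comap_add_one hS LinearMap.id hxU hxS
  rwa [comap_id, inf_comm] at this

theorem ncard_isCoatom_of_finrank_eq_two [Finite K] (h : finrank K V = 2) :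
    {S : Submodule K V | IsCoatom S}.ncard = Nat.card K + 1 := by
  have : FiniteDimensional K V := Module.finite_of_finrank_eq_succ h
  have hline : {S : Submodule K V | IsCoatom S} = {S : Submodule K V | finrank K S = 1} := by
    ext S
    have := S.finrank_quotient_add_finrank
    simp only [Set.mem_ofPred_eq, isCoatom_iff_finrank_quotient_eq_one]
    omega
  rw [hline, ← Projectivization.card_of_finrank_two K V h,
    Nat.card_congr (Projectivization.equivSubmodule K V)]
  rfl

end DivisionRing

theorem ncard_isCoatom_ge {R M : Type*} [Ring R] [AddCommGroup M] [Module R M]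
    (T : Submodule R M) :
    {S : Submodule R M | IsCoatom S ∧ T ≤ S}.ncard
      = {S : Submodule R (M ⧸ T) | IsCoatom S}.ncard := by
  have himage : {S : Submodule R M | IsCoatom S ∧ T ≤ S}
      = comap T.mkQ '' {S : Submodule R (M ⧸ T) | IsCoatom S} := by
    ext S
    constructor
    · rintro ⟨hS, hTS⟩
      have hS' : comap T.mkQ (map T.mkQ S) = S := by rw [comap_map_mkQ, sup_eq_right.mpr hTS]
      refine ⟨map T.mkQ S, ?_, hS'⟩
      rwa [Set.mem_ofPred_eq, ← isCoatom_comap_iff T.mkQ_surjective, hS']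
    · rintro ⟨Q, hQ, rfl⟩
      refine ⟨(isCoatom_comap_iff T.mkQ_surjective).mpr hQ, ?_⟩
      simpa using comap_mono (f := T.mkQ) (bot_le : ⊥ ≤ Q)
  rw [himage, Set.ncard_image_of_injective _ (comap_injective_of_surjective T.mkQ_surjective)]

end Submodule

open Submodule

section Morphic

variable {V W : Type*} [AddCommGroup V] [Module (ZMod p) V] [AddCommGroup W] [Module (ZMod p) W]
  {β : V →ₗ[ZMod p] V →ₗ[ZMod p] W}

theorem der_eq_map₂ (U : Submodule (ZMod p) V) : der β U = map₂ β U U := by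
  rw [map₂_eq_span_image2]
  rfl

theorem mem_der {U : Submodule (ZMod p) V} {x y : V} (hx : x ∈ U) (hy : y ∈ U) :
    β x y ∈ der β U :=
  subset_span ⟨x, hx, y, hy, rfl⟩

theorem der_mono {U₁ U₂ : Submodule (ZMod p) V} (h : U₁ ≤ U₂) : der β U₁ ≤ der β U₂ := by
  simp only [der_eq_map₂]
  exact map₂_le_map₂ h h

theorem der_sup_span_singleton (hβ : β.IsAlt) (T : Submodule (ZMod p) V) (b : V) :
    der β (T ⊔ span (ZMod p) {b}) = der β T ⊔ map (β b) T := by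
  have hflip : map (β.flip b) T = map (β b) T := by
    rw [show β.flip b = -β b from LinearMap.ext fun t => (hβ.neg b t).symm, Submodule.map_neg]
  have hbb : map (β.flip b) (span (ZMod p) {b}) = ⊥ := by
    rw [map_span, Set.image_singleton, LinearMap.flip_apply, hβ b, span_singleton_eq_bot]
  rw [der_eq_map₂, der_eq_map₂, map₂_sup_right, map₂_span_singleton_eq_map_flip,
    Submodule.map_sup, hbb, sup_bot_eq, hflip, map₂_sup_left, map₂_span_singleton_eq_map,
    sup_assoc, sup_idem]

/-- The paper's `T(U)`, for a chosen `a ∉ U`. -/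
def tSubspace (β : V →ₗ[ZMod p] V →ₗ[ZMod p] W) (U : Submodule (ZMod p) V) (a : V) :
    Submodule (ZMod p) V :=
  U ⊓ (der β U).comap (β a)

variable [Fact p.Prime] {U : Submodule (ZMod p) V}

theorem tSubspace_le_of_notMem (hU : IsCoatom U) {a b : V} (ha : a ∉ U) :
    tSubspace β U a ≤ tSubspace β U b := by
  rintro r ⟨hrU, hr⟩
  obtain ⟨μ, hμ⟩ := exists_sub_smul_mem_of_isCoatom hU ha b
  have hb : β b r = β (b - μ • a) r + μ • β a r := by simp
  exact ⟨hrU, show β b r ∈ der β U from hb ▸ add_mem (mem_der hμ hrU) (smul_mem _ μ hr)⟩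

theorem exists_mem_apply_notMem_der (hβ : IsMorphicTriple β) (hU : IsCoatom U) {a : V}
    (ha : a ∉ U) : ∃ u ∈ U, β a u ∉ der β U := by
  by_contra! h
  apply (hβ.2.2.1 U hU).1
  rw [← hβ.2.1, ← (isCompl_span_singleton_of_isCoatom_of_notMem hU ha).sup_eq_top,
    der_sup_span_singleton hβ.1, left_eq_sup, map_le_iff_le_comap]
  exact h

theorem finrank_tSubspace_add_one [FiniteDimensional (ZMod p) V] (hβ : IsMorphicTriple β)
    (hU : IsCoatom U) {a : V} (ha : a ∉ U) :
    finrank (ZMod p) (tSubspace β U a) + 1 = finrank (ZMod p) U := by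
  obtain ⟨u, hu, hau⟩ := exists_mem_apply_notMem_der hβ hU ha
  exact finrank_inf_comap_add_one (hβ.2.2.1 U hU) (β a) hu hau

theorem finrank_quotient_tSubspace [FiniteDimensional (ZMod p) V] (hβ : IsMorphicTriple β)
    (hU : IsCoatom U) {a : V} (ha : a ∉ U) :
    finrank (ZMod p) (V ⧸ tSubspace β U a) = 2 := by
  have := finrank_tSubspace_add_one hβ hU ha
  have := isCoatom_iff_finrank_quotient_eq_one.mp hU
  have := U.finrank_quotient_add_finrank
  have := (tSubspace β U a).finrank_quotient_add_finrank
  omega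

theorem der_eq_der_iff_inf_le_tSubspace (hβ : IsMorphicTriple β) (hU : IsCoatom U)
    {S : Submodule (ZMod p) V} (hS : IsCoatom S) {b : V} (hbS : b ∈ S) (hbU : b ∉ U) :
    der β S = der β U ↔ S ⊓ U ≤ tSubspace β U b := by
  have hS_eq : S = S ⊓ U ⊔ span (ZMod p) {b} := by
    rw [inf_sup_assoc_of_le _ (span_singleton_le_iff_mem b S |>.mpr hbS),
      (isCompl_span_singleton_of_isCoatom_of_notMem hU hbU).sup_eq_top, inf_top_eq]
  have hderS : der β S = der β (S ⊓ U) ⊔ map (β b) (S ⊓ U) := by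
    conv_lhs => rw [hS_eq]
    exact der_sup_span_singleton hβ.1 _ b
  constructor
  · intro h
    refine le_inf inf_le_right (map_le_iff_le_comap.mp ?_)
    rw [← h, hderS]
    exact le_sup_right
  · intro h
    have hle : der β S ≤ der β U := by
      rw [hderS]
      exact sup_le (der_mono inf_le_right) (map_le_iff_le_comap.mpr (h.trans inf_le_right))
    exact ((hβ.2.2.1 S hS).le_iff_eq (hβ.2.2.1 U hU).1 |>.mp hle).symm

theorem der_eq_der_iff_tSubspace_le [FiniteDimensional (ZMod p) V] (hβ : IsMorphicTriple β)
    (hU : IsCoatom U) {a : V} (ha : a ∉ U) {S : Submodule (ZMod p) V} (hS : IsCoatom S) :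
    der β S = der β U ↔ tSubspace β U a ≤ S := by
  by_cases hSU : S = U
  · subst hSU
    exact iff_of_true rfl inf_le_left
  obtain ⟨b, hbS, hbU⟩ := SetLike.not_le_iff_exists.mp fun h => hSU ((hS.le_iff_eq hU.1).mp h).symm
  have hT : tSubspace β U a = tSubspace β U b :=
    le_antisymm (tSubspace_le_of_notMem hU ha) (tSubspace_le_of_notMem hU hbU)
  have hTrank := finrank_tSubspace_add_one hβ hU hbU
  have hSUrank := finrank_inf_add_one_of_isCoatom hS hU hSU
  rw [der_eq_der_iff_inf_le_tSubspace hβ hU hS hbS hbU, hT]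
  constructor
  · intro h
    rw [← eq_of_le_of_finrank_eq h (by omega)]
    exact inf_le_left
  · intro h
    rw [eq_of_le_of_finrank_eq (le_inf h inf_le_left) (by omega)]

end Morphic

theorem card_fiber_der_general [Fact p.Prime]
    {V W : Type*} [AddCommGroup V] [Module (ZMod p) V] [FiniteDimensional (ZMod p) V]
    [AddCommGroup W] [Module (ZMod p) W]
    (β : V →ₗ[ZMod p] V →ₗ[ZMod p] W) (hβ : IsMorphicTriple β)
    (U : Submodule (ZMod p) V) (hU : IsCoatom U) (a : V) (ha : a ∉ U) :
    Set.ncard {S : Submodule (ZMod p) V | IsCoatom S ∧ der β S = der β U} = p + 1 ∧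
      {S : Submodule (ZMod p) V | IsCoatom S ∧ der β S = der β U}
        = {S : Submodule (ZMod p) V |
            IsCoatom S ∧ {x : V | x ∈ U ∧ β a x ∈ der β U} ⊆ (S : Set V)} := by
  have hfiber : {S : Submodule (ZMod p) V | IsCoatom S ∧ der β S = der β U}
      = {S | IsCoatom S ∧ tSubspace β U a ≤ S} :=
    Set.ext fun S => and_congr_right fun hS => der_eq_der_iff_tSubspace_le hβ hU ha hS
  refine ⟨?_, hfiber⟩
  rw [hfiber, ncard_isCoatom_ge, ncard_isCoatom_of_finrank_eq_two
    (finrank_quotient_tSubspace hβ hU ha), Nat.card_zmod]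

/-- In a morphic triple, with `U` maximal in `V` and `a ∈ V \ U`, the set of maximal
subspaces `S` of `V` with `S' = U'` has exactly `p + 1` elements, and consists of the
maximal subspaces of `V` containing `T(U) = {x ∈ U : [a,x] ∈ U'}`. -/
theorem card_fiber_der [Fact p.Prime]
    {V W : Type*} [AddCommGroup V] [Module (ZMod p) V] [FiniteDimensional (ZMod p) V]
    [AddCommGroup W] [Module (ZMod p) W] [FiniteDimensional (ZMod p) W]
    (β : V →ₗ[ZMod p] V →ₗ[ZMod p] W) (hβ : IsMorphicTriple β)
    (U : Submodule (ZMod p) V) (hU : IsCoatom U) (a : V) (ha : a ∉ U) :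
    Set.ncard {S : Submodule (ZMod p) V | IsCoatom S ∧ der β S = der β U} = p + 1 ∧
      {S : Submodule (ZMod p) V | IsCoatom S ∧ der β S = der β U}
        = {S : Submodule (ZMod p) V |
            IsCoatom S ∧ {x : V | x ∈ U ∧ β a x ∈ der β U} ⊆ (S : Set V)} :=
  card_fiber_der_general β hβ U hU a ha
end

section
/- In a morphic triple (V, W, β) with dim V = d, the map U ↦ U' from maximal subspaces of V to maximal subspaces of W has fibers of size p+1, hence (1 + p + ⋯ + p^{d-1}) is divisible by 1 + p; in particular d is even. -/
/-!
Fix a fibre, i.e. a maximal subspace `Z = U₀'` of `W`, and compose `β` with `W → W/Z ≅ 𝔽_p` to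
get an alternating form `B`. A maximal `U` lies in the fibre iff `B` vanishes on `U × U`. Since
`B ≠ 0` (because `V' = W`) and `U₀` is a totally isotropic hyperplane, the radical `R` of `B` is
`U₀ ∩ {x | B x v = 0}` for any `v ∉ U₀`, of codimension 2, and the totally isotropic hyperplanes
are exactly the hyperplanes containing `R`. So the fibre is in bijection with the `p + 1` lines of
the plane `V/R`. Summing over fibres, `p + 1` divides the number `1 + p + ⋯ + p^(d-1)` of
hyperplanes of `V`, which is `≡ 1 (mod p + 1)` when `d` is odd.
-/

open Module

variable {p : ℕ}

open LinearMap

namespace Submodule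

section Field

variable {K V : Type*} [Field K] [AddCommGroup V] [Module K V]

theorem ncard_setOf_isAtom [Finite K] :
    {S : Submodule K V | IsAtom S}.ncard = ∑ i ∈ Finset.range (finrank K V), Nat.card K ^ i := by
  rw [← Projectivization.card_of_finrank K V rfl, ← Nat.card_coe_set_eq]
  exact Nat.card_congr <| ((Projectivization.equivSubmodule K V).trans
    (Equiv.subtypeEquivRight fun _ => isAtom_iff_finrank_eq_one.symm)).symm

theorem ncard_setOf_isCoatom [Finite K] [FiniteDimensional K V] :
    {U : Submodule K V | IsCoatom U}.ncard = ∑ i ∈ Finset.range (finrank K V), Nat.card K ^ i := by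
  let e := Subspace.orderIsoFiniteDimensional (K := K) (V := V)
  rw [← Subspace.dual_finrank_eq, ← ncard_setOf_isAtom, ← Nat.card_coe_set_eq,
    ← Nat.card_coe_set_eq]
  exact Nat.card_congr <| (e.toEquiv.subtypeEquiv fun U => (e.isCoatom_iff U).symm).trans
    (OrderDual.ofDual.subtypeEquiv fun S =>
      by exact isCoatom_dual_iff_isAtom (a := OrderDual.ofDual S))

theorem ncard_setOf_isCoatom_le [Finite K] [FiniteDimensional K V] (R : Submodule K V) :
    {U : Submodule K V | IsCoatom U ∧ R ≤ U}.ncard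
      = ∑ i ∈ Finset.range (finrank K (V ⧸ R)), Nat.card K ^ i := by
  rw [← ncard_setOf_isCoatom,
    ← Set.ncard_image_of_injective _ (comap_injective_of_surjective R.mkQ_surjective)]
  congr 1
  ext U
  constructor
  · rintro ⟨hU, hRU⟩
    refine ⟨U.map R.mkQ, isCoatom_map_of_ker_le R.mkQ_surjective (by rwa [ker_mkQ]) hU, ?_⟩
    rw [comap_map_mkQ, sup_eq_right.2 hRU]
  · rintro ⟨Y, hY, rfl⟩
    exact ⟨(isCoatom_comap_iff R.mkQ_surjective).2 hY, le_comap_mkQ R Y⟩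

theorem finrank_add_one_of_isCoatom [FiniteDimensional K V] {U : Submodule K V}
    (hU : IsCoatom U) : finrank K U + 1 = finrank K V := by
  rw [← U.finrank_quotient_add_finrank,
    isSimpleModule_iff_finrank_eq_one.1 (isSimpleModule_iff_isCoatom.2 hU), add_comm]

theorem finrank_quotient_inf_of_isCoatom [FiniteDimensional K V] {U H : Submodule K V}
    (hU : IsCoatom U) (hH : IsCoatom H) (hne : U ≠ H) : finrank K (V ⧸ (U ⊓ H)) = 2 := by
  have hdim := finrank_sup_add_finrank_inf_eq U H
  rw [hU.sup_eq_top_of_ne hH hne, finrank_top] at hdim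
  have := (U ⊓ H).finrank_quotient_add_finrank
  have := finrank_add_one_of_isCoatom hU
  have := finrank_add_one_of_isCoatom hH
  omega

theorem exists_eq_sup_span_singleton_of_covBy {R U U₀ : Submodule K V} (hU₀ : IsCoatom U₀)
    (hU : IsCoatom U) (hne : U ≠ U₀) (hR : R ⋖ U₀) (hRU : R ≤ U) : ∃ w, U = R ⊔ K ∙ w := by
  obtain ⟨w, hwU, hwU₀⟩ : ∃ w ∈ U, w ∉ U₀ :=
    SetLike.not_le_iff_exists.1 fun h => hne ((hU.le_iff.1 h).resolve_left hU₀.1).symm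
  have hinf : U ⊓ U₀ = R := by
    refine (hR.eq_or_eq (le_inf hRU hR.le) inf_le_right).resolve_right fun h => hne ?_
    exact (hU₀.le_iff.1 (inf_eq_right.1 h)).resolve_left hU.1
  refine ⟨w, ?_⟩
  have hspan : K ∙ w ≤ U := (span_singleton_le_iff_mem w U).2 hwU
  have htop : U₀ ⊔ K ∙ w = ⊤ := (isCompl_span_singleton_of_isCoatom_of_notMem hU₀ hwU₀).sup_eq_top
  calc U = (K ∙ w ⊔ U₀) ⊓ U := by rw [sup_comm, htop, top_inf_eq]
    _ = R ⊔ K ∙ w := by rw [sup_inf_assoc_of_le _ hspan, inf_comm, hinf, sup_comm]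

end Field

theorem eq_top_of_isCoatom_le {R M : Type*} [Semiring R] [AddCommMonoid M] [Module R M]
    {U N : Submodule R M} {v : M} (hU : IsCoatom U) (hUN : U ≤ N) (hvN : v ∈ N) (hvU : v ∉ U) :
    N = ⊤ :=
  (hU.le_iff.1 hUN).resolve_right fun h => hvU (h ▸ hvN)

end Submodule

def LinearMap.IsTotallyIsotropic {K V M : Type*} [CommRing K] [AddCommGroup V] [Module K V]
    [AddCommGroup M] [Module K M] (B : V →ₗ[K] V →ₗ[K] M) (U : Submodule K V) : Prop :=
  ∀ x ∈ U, ∀ y ∈ U, B x y = 0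

namespace LinearMap.IsAlt

open Submodule

section CommRing

variable {K V M : Type*} [CommRing K] [AddCommGroup V] [Module K V] [AddCommGroup M] [Module K M]
  {B : V →ₗ[K] V →ₗ[K] M}

theorem isTotallyIsotropic_ker_sup_span_singleton (hB : B.IsAlt) (w : V) :
    B.IsTotallyIsotropic (ker B ⊔ K ∙ w) := by
  have hker : ∀ x, ker B ≤ ker (B x) := fun x r hr => hB.eq_iff.2 (by simp [mem_ker.1 hr])
  have hw : ker B ⊔ K ∙ w ≤ ker (B.flip w) :=
    sup_le (fun r hr => by simp [mem_ker.1 hr]) ((span_singleton_le_iff_mem _ _).2 (hB w))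
  intro x hx y hy
  exact sup_le (hker x) ((span_singleton_le_iff_mem _ _).2 (hw hx)) hy

theorem ker_le_of_isCoatom (hB : B.IsAlt) (hB0 : B ≠ 0) {U : Submodule K V} (hU : IsCoatom U)
    (hUB : B.IsTotallyIsotropic U) : ker B ≤ U := by
  intro r hr
  by_contra hrU
  have hUker : U ≤ ker B := fun u hu => ker_eq_top.1 <|
    eq_top_of_isCoatom_le hU (fun y hy => hUB u hu y hy) (hB.eq_iff.2 (by simp [mem_ker.1 hr])) hrU
  exact hB0 (ker_eq_top.1 (eq_top_of_isCoatom_le hU hUker hr hrU))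

theorem ker_eq_inf_ker_flip (hB : B.IsAlt) (hB0 : B ≠ 0) {U : Submodule K V} (hU : IsCoatom U)
    (hUB : B.IsTotallyIsotropic U) {v : V} (hv : v ∉ U) : ker B = U ⊓ ker (B.flip v) := by
  ext x
  constructor
  · intro hx
    exact ⟨hB.ker_le_of_isCoatom hB0 hU hUB hx, by simp [mem_ker.1 hx]⟩
  · rintro ⟨hxU, hxv⟩
    exact ker_eq_top.1 (eq_top_of_isCoatom_le hU (fun y hy => hUB x hxU y hy) hxv hv)

end CommRing

section Field

variable {K V M : Type*} [Field K] [AddCommGroup V] [Module K V] [AddCommGroup M] [Module K M]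
  [IsSimpleModule K M] {B : V →ₗ[K] V →ₗ[K] M}

theorem isCoatom_ker_flip (hB : B.IsAlt) (hB0 : B ≠ 0) {U : Submodule K V} (hU : IsCoatom U)
    (hUB : B.IsTotallyIsotropic U) {v : V} (hv : v ∉ U) : IsCoatom (ker (B.flip v)) := by
  refine isCoatom_ker_of_surjective (range_eq_top.1 ?_)
  refine (eq_bot_or_eq_top _).resolve_left fun h => hv (hB.ker_le_of_isCoatom hB0 hU hUB ?_)
  exact LinearMap.ext fun y => hB.eq_iff.1 (LinearMap.congr_fun (range_eq_bot.1 h) y)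

theorem finrank_quotient_ker [FiniteDimensional K V] (hB : B.IsAlt) (hB0 : B ≠ 0)
    {U : Submodule K V} (hU : IsCoatom U) (hUB : B.IsTotallyIsotropic U) :
    finrank K (V ⧸ ker B) = 2 := by
  obtain ⟨v, hv⟩ := SetLike.exists_not_mem_of_ne_top U hU.1
  rw [hB.ker_eq_inf_ker_flip hB0 hU hUB hv]
  exact finrank_quotient_inf_of_isCoatom hU (hB.isCoatom_ker_flip hB0 hU hUB hv)
    fun h => hv (h ▸ hB v)

theorem isTotallyIsotropic_iff_ker_le (hB : B.IsAlt) (hB0 : B ≠ 0) {U₀ : Submodule K V}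
    (hU₀ : IsCoatom U₀) (hU₀B : B.IsTotallyIsotropic U₀) {U : Submodule K V} (hU : IsCoatom U) :
    B.IsTotallyIsotropic U ↔ ker B ≤ U := by
  refine ⟨hB.ker_le_of_isCoatom hB0 hU, fun hker => ?_⟩
  obtain rfl | hne := eq_or_ne U U₀
  · exact hU₀B
  obtain ⟨v, hv⟩ := SetLike.exists_not_mem_of_ne_top U₀ hU₀.1
  have hH := hB.isCoatom_ker_flip hB0 hU₀ hU₀B hv
  have hcov : ker B ⋖ U₀ := by
    rw [hB.ker_eq_inf_ker_flip hB0 hU₀ hU₀B hv]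
    refine inf_covBy_of_covBy_sup_right ?_
    rw [hU₀.sup_eq_top_of_ne hH fun h => hv (h ▸ hB v)]
    exact covBy_top_iff.2 hH
  obtain ⟨w, rfl⟩ := exists_eq_sup_span_singleton_of_covBy hU₀ hU hne hcov hker
  exact hB.isTotallyIsotropic_ker_sup_span_singleton w

end Field

end LinearMap.IsAlt

theorem Set.dvd_ncard_of_dvd_ncard_fiber {α β : Type*} (s : Set α) (f : α → β) {k : ℕ}
    (h : ∀ b ∈ f '' s, k ∣ {a ∈ s | f a = b}.ncard) : k ∣ s.ncard := by
  classical
  obtain hs | hs := s.finite_or_infinite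
  · rw [s.ncard_eq_toFinset_card hs, Finset.card_eq_sum_card_image f]
    refine Finset.dvd_sum fun b hb => ?_
    have hfib : ((hs.toFinset.filter (f · = b) : Finset α) : Set α) = {a ∈ s | f a = b} := by
      ext
      simp
    rw [← Set.ncard_coe_finset, hfib]
    exact h b (by simpa using hb)
  · rw [hs.ncard]
    exact dvd_zero k

theorem Nat.even_of_add_one_dvd_geom_sum {p d : ℕ} (hp : p ≠ 0)
    (h : p + 1 ∣ ∑ i ∈ Finset.range d, p ^ i) : Even d := by
  by_contra hd
  have hneg : (p : ZMod (p + 1)) = -1 :=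
    eq_neg_of_add_eq_zero_left (by exact_mod_cast ZMod.natCast_self (p + 1))
  have hsum := (ZMod.natCast_eq_zero_iff _ (p + 1)).2 h
  push_cast at hsum
  rw [hneg, neg_one_geom_sum, if_neg hd] at hsum
  have := Nat.dvd_one.1 ((ZMod.natCast_eq_zero_iff 1 (p + 1)).1 (by exact_mod_cast hsum))
  omega

section MorphicTriple

variable {V W : Type*} [AddCommGroup V] [Module (ZMod p) V]
  [AddCommGroup W] [Module (ZMod p) W] {β : V →ₗ[ZMod p] V →ₗ[ZMod p] W}

theorem der_le_iff_isTotallyIsotropic {U : Submodule (ZMod p) V} {Z : Submodule (ZMod p) W} :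
    der β U ≤ Z ↔ (β.compr₂ Z.mkQ).IsTotallyIsotropic U := by
  rw [der, pairSpan, Submodule.span_le]
  simp only [LinearMap.IsTotallyIsotropic, LinearMap.compr₂_apply, Submodule.mkQ_apply,
    Submodule.Quotient.mk_eq_zero]
  exact ⟨fun h x hx y hy => h ⟨x, hx, y, hy, rfl⟩, fun h _ ⟨x, hx, y, hy, hw⟩ => hw ▸ h x hx y hy⟩

variable [Fact p.Prime] [FiniteDimensional (ZMod p) V]

theorem ncard_fiber_der (hβ : β.IsAlt) (htop : der β ⊤ = ⊤)
    (hco : ∀ U : Submodule (ZMod p) V, IsCoatom U → IsCoatom (der β U))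
    {U₀ : Submodule (ZMod p) V} (hU₀ : IsCoatom U₀) :
    {U : Submodule (ZMod p) V | IsCoatom U ∧ der β U = der β U₀}.ncard = p + 1 := by
  set Z := der β U₀
  have : IsSimpleModule (ZMod p) (W ⧸ Z) := isSimpleModule_iff_isCoatom.2 (hco U₀ hU₀)
  set B := β.compr₂ Z.mkQ
  have hB : B.IsAlt := fun v => by simp [B, hβ v]
  have hB0 : B ≠ 0 := fun h => (hco U₀ hU₀).1 <| top_le_iff.1 <| htop ▸
    der_le_iff_isTotallyIsotropic.2 fun x _ y _ => LinearMap.congr_fun₂ h x y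
  have hU₀B : B.IsTotallyIsotropic U₀ := der_le_iff_isTotallyIsotropic.1 le_rfl
  have hfiber : {U | IsCoatom U ∧ der β U = Z} = {U | IsCoatom U ∧ LinearMap.ker B ≤ U} := by
    ext U
    refine and_congr_right fun hU => ?_
    rw [← hB.isTotallyIsotropic_iff_ker_le hB0 hU₀ hU₀B hU, ← der_le_iff_isTotallyIsotropic]
    exact ⟨le_of_eq, fun h => ((hco U hU).le_iff.1 h).resolve_left (hco U₀ hU₀).1 |>.symm⟩
  rw [hfiber, Submodule.ncard_setOf_isCoatom_le, hB.finrank_quotient_ker hB0 hU₀ hU₀B,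
    Nat.card_zmod]
  simp [Finset.sum_range_succ, add_comm]

end MorphicTriple

theorem fibers_and_d_even_general [Fact p.Prime]
    {V W : Type*} [AddCommGroup V] [Module (ZMod p) V] [FiniteDimensional (ZMod p) V]
    [AddCommGroup W] [Module (ZMod p) W]
    (β : V →ₗ[ZMod p] V →ₗ[ZMod p] W) (hβ : IsMorphicTriple β)
    (d : ℕ) (hd : Module.finrank (ZMod p) V = d) :
    (∀ Z : Submodule (ZMod p) W,
        Z ∈ der β '' {U : Submodule (ZMod p) V | IsCoatom U} →
        Set.ncard {U : Submodule (ZMod p) V | IsCoatom U ∧ der β U = Z} = p + 1) ∧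
      (1 + p) ∣ ∑ i ∈ Finset.range d, p ^ i ∧ Even d := by
  obtain ⟨halt, htop, hco, -⟩ := hβ
  have hfiber : ∀ Z ∈ der β '' {U : Submodule (ZMod p) V | IsCoatom U},
      {U : Submodule (ZMod p) V | IsCoatom U ∧ der β U = Z}.ncard = p + 1 := by
    rintro Z ⟨U₀, hU₀, rfl⟩
    exact ncard_fiber_der halt htop hco hU₀
  have hdvd : p + 1 ∣ ∑ i ∈ Finset.range d, p ^ i := by
    have hcount := Submodule.ncard_setOf_isCoatom (K := ZMod p) (V := V)
    rw [Nat.card_zmod, hd] at hcount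
    rw [← hcount]
    exact Set.dvd_ncard_of_dvd_ncard_fiber _ (der β) fun Z hZ => (hfiber Z hZ).symm ▸ dvd_rfl
  refine ⟨hfiber, add_comm p 1 ▸ hdvd, ?_⟩
  exact Nat.even_of_add_one_dvd_geom_sum (Fact.out : p.Prime).ne_zero hdvd

/-- In a morphic triple with `dim V = d`, the map `U ↦ U'` from maximal subspaces of
`V` to maximal subspaces of `W` has all its fibers of size `p + 1`; hence
`1 + p + ⋯ + p^(d-1)` is divisible by `1 + p`, and in particular `d` is even. -/
theorem fibers_and_d_even [Fact p.Prime]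
    {V W : Type*} [AddCommGroup V] [Module (ZMod p) V] [FiniteDimensional (ZMod p) V]
    [AddCommGroup W] [Module (ZMod p) W] [FiniteDimensional (ZMod p) W]
    (β : V →ₗ[ZMod p] V →ₗ[ZMod p] W) (hβ : IsMorphicTriple β)
    (d : ℕ) (hd : Module.finrank (ZMod p) V = d) :
    (∀ Z : Submodule (ZMod p) W,
        Z ∈ der β '' {U : Submodule (ZMod p) V | IsCoatom U} →
        Set.ncard {U : Submodule (ZMod p) V | IsCoatom U ∧ der β U = Z} = p + 1) ∧
      (1 + p) ∣ ∑ i ∈ Finset.range d, p ^ i ∧ Even d :=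
  fibers_and_d_even_general β hβ d hd
end
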